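/- Let N ≥ 1 and let α₁, …, α_N be persistence diagrams, i.e. each α_i is a finite sum of Dirac measures at points of {(x,y) ∈ ℝ² : x < y}. Let μ := (1/N) Σ_{i=1}^N α_i be their mean measure (a q-tame Borel measure), with continuous persistence landscape λ_μ. Fix a positive integer k and t ∈ ℝ, and set h := λ_μ(k,t). If for every i the closed quadrant contains exactly k points of α_i, i.e. α_i(Q̄_{t,h}) = k for each i = 1, …, N, then λ_μ(k,t) ≤ (1/N) Σ_{i=1}^N λ_{α_i}(k,t), where λ_{α_i} is the continuous persistence landscape of α_i; i.e. the continuous persistence landscape of the mean measure at level k is bounded above by the average of the landscapes of the samples at level k. -/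
import Mathlib


open MeasureTheory Set Filter

/-- The open quadrant `Q_{t,h} = (-∞, t-h) × (t+h, ∞)`. -/
def quadrant (t h : ℝ) : Set (ℝ × ℝ) := Set.Iio (t - h) ×ˢ Set.Ioi (t + h)

/-- A Borel measure on `ℝ²` is q-tame if every open quadrant has finite measure. -/
def QTame (μ : Measure (ℝ × ℝ)) : Prop := ∀ t h : ℝ, 0 ≤ h → μ (quadrant t h) < ⊤

/-- The continuous persistence landscape `λ_μ(a,t) = sup {h > 0 : μ(Q_{t,h}) ≥ a}`,
with the convention `sup ∅ = 0` (which is the convention of `Real.sSup`). -/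
noncomputable def landscape (μ : Measure (ℝ × ℝ)) (a t : ℝ) : ℝ :=
  sSup {h : ℝ | 0 < h ∧ a ≤ (μ (quadrant t h)).toReal}
open scoped ENNReal

/-- The closed quadrant `Q̄_{t,h} = (-∞, t-h] × [t+h, ∞)`. -/
def closedQuadrant (t h : ℝ) : Set (ℝ × ℝ) := Set.Iic (t - h) ×ˢ Set.Ici (t + h)

lemma quadrant_measurable (t h : ℝ) : MeasurableSet (quadrant t h) :=
  measurableSet_Iio.prod measurableSet_Ioi

lemma landscape_ge_aux (α : Measure (ℝ × ℝ)) (m : ℕ) (f : Fin m → ℝ × ℝ)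
    (hα : α = ∑ j, Measure.dirac (f j)) (k : ℕ) (hk : 1 ≤ k) (t h : ℝ) (hh : 0 < h)
    (hcount : (k : ℝ≥0∞) ≤ α (closedQuadrant t h)) : h ≤ landscape α (k : ℝ) t := by
  set S : Set ℝ := {h : ℝ | 0 < h ∧ (k : ℝ) ≤ (α (quadrant t h)).toReal} with hS
  have hfin : ∀ h' : ℝ, α (quadrant t h') ≤ (m : ℝ≥0∞) := by
    intro h'
    rw [hα, Measure.finset_sum_apply]
    calc ∑ j, Measure.dirac (f j) (quadrant t h') ≤ ∑ _j : Fin m, 1 := by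
          apply Finset.sum_le_sum
          intro j _
          calc Measure.dirac (f j) (quadrant t h') ≤ Measure.dirac (f j) univ :=
                measure_mono (subset_univ _)
            _ = 1 := by simp
      _ = (m : ℝ≥0∞) := by simp
  have hmem : ∀ h' : ℝ, 0 < h' → h' < h → h' ∈ S := by
    intro h' h0 h1
    refine ⟨h0, ?_⟩
    have hsub : closedQuadrant t h ⊆ quadrant t h' := by
      rintro ⟨x, y⟩ ⟨hx, hy⟩
      simp only [mem_Iic] at hx
      simp only [mem_Ici] at hy
      exact ⟨by simp only [mem_Iio]; linarith, by simp only [mem_Ioi]; linarith⟩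
    have hle : (k : ℝ≥0∞) ≤ α (quadrant t h') := hcount.trans (measure_mono hsub)
    have hne : α (quadrant t h') ≠ ⊤ := ne_top_of_le_ne_top (by simp) (hfin h')
    have := ENNReal.toReal_mono hne hle
    simpa using this
  have hbdd : BddAbove S := by
    refine ⟨(∑ j, |t - (f j).1|) + 1, ?_⟩
    rintro h' ⟨h0, hk'⟩
    have hne : α (quadrant t h') ≠ 0 := by
      intro h0'
      rw [h0'] at hk'
      simp at hk'
      have : (1:ℝ) ≤ (k:ℝ) := by exact_mod_cast hk
      linarith
    rw [hα, Measure.finset_sum_apply] at hne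
    have : ∃ j : Fin m, Measure.dirac (f j) (quadrant t h') ≠ 0 := by
      by_contra hc
      push_neg at hc
      exact hne (Finset.sum_eq_zero (fun j _ => hc j))
    obtain ⟨j, hj⟩ := this
    have hmemj : f j ∈ quadrant t h' := by
      by_contra hc
      rw [Measure.dirac_apply' _ (quadrant_measurable t h')] at hj
      simp [Set.indicator_of_notMem hc] at hj
    have h1 : (f j).1 < t - h' := hmemj.1
    have h2 : t - (f j).1 ≤ ∑ j', |t - (f j').1| :=
      le_trans (le_abs_self _) (Finset.single_le_sum (f := fun j' => |t - (f j').1|) (fun j' _ => abs_nonneg _) (Finset.mem_univ j))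
    linarith
  have hioo : Set.Ioo 0 h ⊆ S := fun x hx => hmem x hx.1 hx.2
  calc h = sSup (Set.Ioo 0 h) := (csSup_Ioo hh).symm
    _ ≤ sSup S := csSup_le_csSup hbdd ⟨h/2, by constructor <;> linarith⟩ hioo

lemma landscape_nonneg (μ : Measure (ℝ × ℝ)) (a t : ℝ) : 0 ≤ landscape μ a t :=
  Real.sSup_nonneg (fun _ hx => le_of_lt hx.1)

/-- Comparison of the continuous persistence landscape of the mean measure with
the average of the landscapes of the sample persistence diagrams. -/
theorem mean_landscape_le_average_landscape (N : ℕ) (hN : 1 ≤ N)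
    (α : Fin N → Measure (ℝ × ℝ))
    (hα : ∀ i, ∃ (m : ℕ) (f : Fin m → ℝ × ℝ),
      (∀ j, (f j).1 < (f j).2) ∧ α i = ∑ j, Measure.dirac (f j))
    (k : ℕ) (hk : 1 ≤ k) (t : ℝ)
    (hcount : ∀ i, α i (closedQuadrant t
        (landscape ((N : ℝ≥0∞)⁻¹ • ∑ i, α i) (k : ℝ) t)) = (k : ℝ≥0∞)) :
    landscape ((N : ℝ≥0∞)⁻¹ • ∑ i, α i) (k : ℝ) t ≤
      (N : ℝ)⁻¹ * ∑ i, landscape (α i) (k : ℝ) t := by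
  set h := landscape ((N : ℝ≥0∞)⁻¹ • ∑ i, α i) (k : ℝ) t with hh
  have hNpos : (0 : ℝ) < N := by exact_mod_cast hN
  rcases le_or_gt h 0 with h0 | h0
  · calc h ≤ 0 := h0
      _ ≤ (N : ℝ)⁻¹ * ∑ i, landscape (α i) (k : ℝ) t :=
        mul_nonneg (by positivity) (Finset.sum_nonneg fun i _ => landscape_nonneg _ _ _)
  · have key : ∀ i, h ≤ landscape (α i) (k : ℝ) t := by
      intro i
      obtain ⟨m, f, _, hf⟩ := hα i
      exact landscape_ge_aux (α i) m f hf k hk t h h0 (le_of_eq (hcount i).symm)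
    have hsum : (N : ℝ) * h ≤ ∑ i, landscape (α i) (k : ℝ) t := by
      calc (N : ℝ) * h = ∑ _i : Fin N, h := by
            rw [Finset.sum_const, Finset.card_univ, Fintype.card_fin, nsmul_eq_mul]
        _ ≤ _ := Finset.sum_le_sum fun i _ => key i
    calc h = (N : ℝ)⁻¹ * ((N : ℝ) * h) := by field_simp
      _ ≤ (N : ℝ)⁻¹ * ∑ i, landscape (α i) (k : ℝ) t := by
          exact mul_le_mul_of_nonneg_left hsum (by positivity)
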